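/- Let (S(t)) be a C₀-semigroup on H and let Q be a bounded self-adjoint nonnegative operator satisfying Hypothesis H, with Q injective. Let (S_Q(t))_{t≥0} be a C₀-semigroup of self-adjoint contractions on H satisfying S(t)Q^{1/2} = Q^{1/2}S_Q(t) for all t ≥ 0, and let A_Q be its generator. Then A_Q is injective: if x ∈ dom(A_Q) and A_Qx = 0, then x = 0. -/

import Mathlib

/-!
If `A_Q x = 0` then `x` is fixed by every `S_Q(t)`, so by the intertwining relation
`Q^{1/2} x` is fixed by every `S(t)`. Hence for all `s > 0`
`|⟨Q^{1/2} x, e_i⟩| = |⟨x, Q^{1/2} S(s)* e_i⟩| ≤ |x| |Q^{1/2} S(s)* e_i|`, so the integral over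
`(0, ∞)` in Hypothesis H can only be finite if `⟨Q^{1/2} x, e_i⟩ = 0` for every `i`.
Thus `Q^{1/2} x = 0`, so `Q x = 0` and `x = 0` by injectivity of `Q`.
-/

open MeasureTheory Filter Set ContinuousLinearMap
open scoped RealInnerProductSpace ENNReal

noncomputable section

variable {H : Type*} [NormedAddCommGroup H] [InnerProductSpace ℝ H] [CompleteSpace H]

/-- `x ∈ dom(A)` and `Ax = y` for the generator `A` of the semigroup `S`. -/
def genTo (S : ℝ → H →L[ℝ] H) (x y : H) : Prop :=
  Filter.Tendsto (fun t : ℝ => t⁻¹ • (S t x - x)) (nhdsWithin 0 (Set.Ioi 0)) (nhds y)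

section

variable {E : Type*} [NormedAddCommGroup E] [InnerProductSpace ℝ E]

theorem genTo.hasDerivWithinAt {S : ℝ → E →L[ℝ] E}
    (hadd : ∀ s t : ℝ, 0 ≤ s → 0 ≤ t → S (s + t) = (S s).comp (S t))
    {x y : E} (hxy : genTo S x y) {u : ℝ} (hu : 0 ≤ u) :
    HasDerivWithinAt (fun t => S t x) (S u y) (Ici u) u := by
  rw [← hasDerivWithinAt_Ioi_iff_Ici, hasDerivWithinAt_iff_tendsto_slope' self_notMem_Ioi]
  have hshift : Tendsto (fun t : ℝ => t - u) (nhdsWithin u (Ioi u)) (nhdsWithin 0 (Ioi 0)) := by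
    refine tendsto_nhdsWithin_iff.2 ⟨?_, ?_⟩
    · exact tendsto_nhdsWithin_of_tendsto_nhds (by simpa using (continuous_sub_right u).tendsto u)
    · filter_upwards [self_mem_nhdsWithin] with t (ht : u < t) using sub_pos.2 ht
  refine (((S u).continuous.tendsto y).comp (hxy.comp hshift)).congr' ?_
  filter_upwards [self_mem_nhdsWithin] with t (ht : u < t)
  have : S t = (S u).comp (S (t - u)) := by
    simpa using hadd u (t - u) hu (sub_nonneg.2 ht.le)
  simp [slope_def_module, this, map_sub, map_smul]

theorem apply_eq_self_of_genTo_zero {S : ℝ → E →L[ℝ] E} (h0 : S 0 = 1)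
    (hadd : ∀ s t : ℝ, 0 ≤ s → 0 ≤ t → S (s + t) = (S s).comp (S t))
    {x : E} (hcont : ContinuousOn (fun t => S t x) (Ici 0)) (hx : genTo S x 0)
    {t : ℝ} (ht : 0 ≤ t) : S t x = x := by
  have := constant_of_has_deriv_right_zero (hcont.mono Icc_subset_Ici_self)
    (fun u hu => by simpa using hx.hasDerivWithinAt hadd hu.1) t ⟨ht, le_rfl⟩
  simpa [h0] using this

theorem eq_zero_of_inner_eq_zero_of_dense_span {ι : Type*} {e : ι → E}
    (he : Dense (Submodule.span ℝ (range e) : Set E)) {v : E} (h : ∀ i, ⟪v, e i⟫ = 0) :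
    v = 0 := by
  refine he.eq_zero_of_inner_left ℝ fun w hw => ?_
  have : Submodule.span ℝ (range e) ≤ (ℝ ∙ v)ᗮ := by
    rw [Submodule.span_le]
    rintro _ ⟨i, rfl⟩
    exact Submodule.mem_orthogonal_singleton_iff_inner_right.2 (h i)
  exact Submodule.mem_orthogonal_singleton_iff_inner_right.1 (this hw)

end

theorem inner_eq_zero_of_lintegral_lt_top {T : ℝ → H →L[ℝ] H} {R : H →L[ℝ] H}
    (hR : IsSelfAdjoint R) {x w : H} (hfix : ∀ s > 0, T s (R x) = R x)
    (hint : ∫⁻ s in Ioi (0 : ℝ), ‖R (adjoint (T s) w)‖ₑ ^ 2 < ⊤) : ⟪R x, w⟫ = 0 := by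
  have hbound : ∀ s ∈ Ioi (0 : ℝ),
      ‖⟪R x, w⟫‖ₑ ^ 2 ≤ ‖x‖ₑ ^ 2 * ‖R (adjoint (T s) w)‖ₑ ^ 2 := fun s hs => by
    have : ⟪R x, w⟫ = ⟪x, R (adjoint (T s) w)⟫ := by
      rw [← hfix s hs, ← adjoint_inner_right]
      exact hR.isSymmetric _ _
    rw [this, ← mul_pow]
    gcongr
    simpa [enorm_eq_nnnorm] using ENNReal.coe_le_coe.2 (nnnorm_inner_le_nnnorm (𝕜 := ℝ) _ _)
  have : ‖⟪R x, w⟫‖ₑ ^ 2 * ⊤ < ⊤ := calc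
    ‖⟪R x, w⟫‖ₑ ^ 2 * ⊤ = ∫⁻ _ in Ioi (0 : ℝ), ‖⟪R x, w⟫‖ₑ ^ 2 := by simp
    _ ≤ ∫⁻ s in Ioi (0 : ℝ), ‖x‖ₑ ^ 2 * ‖R (adjoint (T s) w)‖ₑ ^ 2 :=
      setLIntegral_mono' measurableSet_Ioi hbound
    _ = ‖x‖ₑ ^ 2 * ∫⁻ s in Ioi (0 : ℝ), ‖R (adjoint (T s) w)‖ₑ ^ 2 :=
      lintegral_const_mul' _ _ (by simp)
    _ < ⊤ := ENNReal.mul_lt_top (by simp) hint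
  simpa [ENNReal.mul_lt_top_iff] using this

theorem statement9 {ι : Type*}
    (S : ℝ → H →L[ℝ] H)
    (Q sqrtQ : H →L[ℝ] H)
    (hsqrt_sa : IsSelfAdjoint sqrtQ)
    (hsqrt_sq : sqrtQ.comp sqrtQ = Q)
    (hQinj : Function.Injective Q)
    -- (e_i) is an orthonormal basis of H
    (e : ι → H)
    (he_tot : Dense ((Submodule.span ℝ (Set.range e) : Submodule ℝ H) : Set H))
    -- Hypothesis H, part 1: ∫₀^∞ Σ_i |Q^{1/2}S(s)*e_i|² ds < ∞
    (hint : (∫⁻ s in Set.Ioi (0:ℝ),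
        ∑' i : ι, (‖sqrtQ (ContinuousLinearMap.adjoint (S s) (e i))‖₊ : ℝ≥0∞) ^ 2) < ⊤)
    -- (S_Q(t)) is a C₀-semigroup of self-adjoint contractions intertwined with S by Q^{1/2}
    (SQ : ℝ → H →L[ℝ] H)
    (hSQ0 : SQ 0 = 1)
    (hSQadd : ∀ s t : ℝ, 0 ≤ s → 0 ≤ t → SQ (s + t) = (SQ s).comp (SQ t))
    (hSQcont : ∀ x : H, ContinuousOn (fun t => SQ t x) (Set.Ici 0))
    (hintertwine : ∀ t : ℝ, 0 ≤ t → (S t).comp sqrtQ = sqrtQ.comp (SQ t)) :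
    ∀ x : H, genTo SQ x 0 → x = 0 := by
  intro x hx
  have hSfix : ∀ s, 0 ≤ s → S s (sqrtQ x) = sqrtQ x := fun s hs => by
    simpa [apply_eq_self_of_genTo_zero hSQ0 hSQadd (hSQcont x) hx hs] using
      congr($(hintertwine s hs) x)
  have hsqrt_x : sqrtQ x = 0 := eq_zero_of_inner_eq_zero_of_dense_span he_tot fun i =>
    inner_eq_zero_of_lintegral_lt_top hsqrt_sa (fun s hs => hSfix s hs.le)
      ((lintegral_mono fun s => by simpa [enorm_eq_nnnorm] using ENNReal.le_tsum i).trans_lt hint)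
  apply hQinj
  rw [← hsqrt_sq, comp_apply, hsqrt_x, map_zero, map_zero]
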